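/- arXiv:1608.04791 — 3 statements merged into one kernel-verified Lean document; each statement's English description precedes it below -/
import Mathlib

section
/- With the choice b = ⌈k / log₂ k⌉, the number of base-b digits of any k-bit number is O(k / log k): there exists a constant C such that for all sufficiently large k, every natural number n < 2^k has at most C·k / log₂ k digits in base ⌈k / log₂ k⌉. -/
open Real

/-- Number of base-`b` digits of `n`: the least `d` with `n < b^d`, with `d = 1` for `n = 0`. -/
def numDigits (b n : ℕ) : ℕ := if n = 0 then 1 else Nat.log b n + 1

open Filter

/-! Since `log₂ k ≤ √k` for large `k`, the base `b = ⌈k / log₂ k⌉` is at least `√k`, so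
`log₂ b ≥ (log₂ k) / 2`. A number below `2^k` has at most `log_b (2^k) + 1 = k / log₂ b + 1`
digits in base `b`, which is at most `2k / log₂ k + 1 ≤ 3k / log₂ k`. -/

lemma numDigits_le_logb_add_one {b n m : ℕ} (hb : 1 < b) (hnm : n < m) :
    (numDigits b n : ℝ) ≤ logb b m + 1 := by
  have hb' : (1 : ℝ) < b := by exact_mod_cast hb
  unfold numDigits
  split_ifs with hn
  · have hm : (1 : ℝ) ≤ m := by exact_mod_cast (show 1 ≤ m by omega)
    simpa using logb_nonneg hb' hm
  · push_cast
    gcongr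
    calc (Nat.log b n : ℝ) ≤ logb b n := natLog_le_logb n b
      _ ≤ logb b m := logb_le_logb_of_le hb' (by positivity) (by exact_mod_cast hnm.le)

lemma numDigits_le_of_lt_two_pow {b n k : ℕ} (hb : 1 < b) (hn : n < 2 ^ k) :
    (numDigits b n : ℝ) ≤ k / logb 2 b + 1 := by
  have h := numDigits_le_logb_add_one hb hn
  rwa [Nat.cast_pow, Nat.cast_ofNat, logb_pow, ← inv_logb, ← div_eq_mul_inv] at h

lemma eventually_logb_le_sqrt {a : ℝ} (ha : 1 < a) : ∀ᶠ x : ℝ in atTop, logb a x ≤ √x := by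
  have hlog : 0 < log a := log_pos ha
  filter_upwards [(isLittleO_log_rpow_atTop one_half_pos).bound hlog, eventually_gt_atTop 0]
    with x hx hx0
  rw [norm_eq_abs, norm_eq_abs, abs_of_pos (rpow_pos_of_pos hx0 _), ← sqrt_eq_rpow] at hx
  rw [logb, div_le_iff₀ hlog, mul_comm]
  exact (le_abs_self _).trans hx

lemma sqrt_le_div_of_le_sqrt {x y : ℝ} (hy : 0 < y) (h : y ≤ √x) : √x ≤ x / y := by
  rw [le_div_iff₀ hy]
  calc √x * y ≤ √x * √x := by gcongr
    _ = x := mul_self_sqrt (sqrt_pos.1 (hy.trans_le h)).le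

lemma logb_sqrt (b : ℝ) {x : ℝ} (hx : 0 ≤ x) : logb b √x = logb b x / 2 := by
  rw [logb, logb, log_sqrt hx, div_right_comm]

/-- With the base chosen as `b = ⌈k / log₂ k⌉`, every `k`-bit number has `O(k / log k)` digits
in base `b`: there is a constant `C` such that for all sufficiently large `k`, every `n < 2^k`
has at most `C·k / log₂ k` digits in base `⌈k / log₂ k⌉`. -/
theorem digits_base_k_div_log :
    ∃ C : ℝ, ∃ K₀ : ℕ, ∀ k : ℕ, K₀ ≤ k → ∀ n : ℕ, n < 2 ^ k →
      (numDigits ⌈(k : ℝ) / Real.logb 2 k⌉₊ n : ℝ) ≤ C * k / Real.logb 2 k := by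
  obtain ⟨K₀, hK₀⟩ := eventually_atTop.1 <| tendsto_natCast_atTop_atTop.eventually
    ((eventually_logb_le_sqrt one_lt_two).and (eventually_gt_atTop 1))
  refine ⟨3, K₀, fun k hk n hn => ?_⟩
  obtain ⟨hL, hk1⟩ := hK₀ k hk
  set L := logb 2 (k : ℝ)
  have hL0 : 0 < L := logb_pos one_lt_two hk1
  have hsqrt : 1 < √(k : ℝ) := by rwa [lt_sqrt zero_le_one, one_pow]
  have hbase : √(k : ℝ) ≤ k / L := sqrt_le_div_of_le_sqrt hL0 hL
  have hb : 1 < ⌈(k : ℝ) / L⌉₊ := Nat.lt_ceil.2 (by push_cast; linarith)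
  have hlogb : L / 2 ≤ logb 2 ⌈(k : ℝ) / L⌉₊ := by
    rw [← logb_sqrt 2 (Nat.cast_nonneg k)]
    exact logb_le_logb_of_le one_lt_two (by linarith) (hbase.trans (Nat.le_ceil _))
  have hLk : 1 ≤ (k : ℝ) / L := by
    linarith [sqrt_le_self_iff.2 (Or.inr hk1.le)]
  calc (numDigits ⌈(k : ℝ) / L⌉₊ n : ℝ) ≤ k / logb 2 ⌈(k : ℝ) / L⌉₊ + 1 :=
        numDigits_le_of_lt_two_pow hb hn
    _ ≤ k / (L / 2) + k / L := by gcongr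
    _ = 3 * k / L := by field_simp; ring
end

section
/- Scaling preserves connectivity: if S ⊆ ℤ² is connected in the grid-adjacency sense, then for any positive integer c the scaled shape c·S = { (c·x + i, c·y + j) : (x,y) ∈ S, 0 ≤ i, j < c } is also connected in the grid-adjacency sense. -/
/-- The grid-adjacency graph of a set `S ⊆ ℤ²`: vertices are the points of `S`, with an edge
between two points at L¹-distance exactly 1. -/
def gridGraph (S : Set (ℤ × ℤ)) : SimpleGraph S where
  Adj p q := ((p : ℤ × ℤ).1 - (q : ℤ × ℤ).1).natAbs + ((p : ℤ × ℤ).2 - (q : ℤ × ℤ).2).natAbs = 1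
  symm := by
    constructor
    intro p q h
    rw [show ((q : ℤ × ℤ).1 - (p : ℤ × ℤ).1) = -((p : ℤ × ℤ).1 - (q : ℤ × ℤ).1) by ring,
      show ((q : ℤ × ℤ).2 - (p : ℤ × ℤ).2) = -((p : ℤ × ℤ).2 - (q : ℤ × ℤ).2) by ring,
      Int.natAbs_neg, Int.natAbs_neg]
    exact h
  loopless := by constructor; intro p h; simp at h

/-- The scale-`c` version of a shape `S ⊆ ℤ²`: each point is replaced by a `c × c` block. -/
def scaleShape (c : ℤ) (S : Set (ℤ × ℤ)) : Set (ℤ × ℤ) :=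
  {p | ∃ q ∈ S, ∃ i j : ℤ, 0 ≤ i ∧ i < c ∧ 0 ≤ j ∧ j < c ∧
    p = (c * q.1 + i, c * q.2 + j)}

/-!
Send each point `q ∈ S` to the corner `c • q` of its block. If `q` and `q'` are adjacent, say
`q' = q + v` with `v` a unit vector pointing right or up, the segment from `c • q` to `c • q'` in
direction `v` runs through the block of `q`; and every point of a block is reached from its corner
by a row followed by a column. Hence paths in `S` lift to paths in the scaled shape.
-/

open Set

namespace SimpleGraph

variable {V W : Type*} {G : SimpleGraph V} {H : SimpleGraph W}

theorem Reachable.lift (f : V → W) (hf : ∀ a b, G.Adj a b → H.Reachable (f a) (f b)) {a b : V}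
    (h : G.Reachable a b) : H.Reachable (f a) (f b) := by
  rw [reachable_iff_reflTransGen] at h ⊢
  exact h.lift' f fun a b hab => (reachable_iff_reflTransGen _ _).1 (hf a b hab)

theorem Connected.lift (hG : G.Connected) (f : V → W)
    (hf : ∀ a b, G.Adj a b → H.Reachable (f a) (f b)) (hcover : ∀ w, ∃ v, H.Reachable (f v) w) :
    H.Connected := by
  have : Nonempty W := hG.nonempty.map f
  refine ⟨fun w w' => ?_⟩
  obtain ⟨v, hv⟩ := hcover w
  obtain ⟨v', hv'⟩ := hcover w'
  exact hv.symm.trans (((hG.preconnected v v').lift f hf).trans hv')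

end SimpleGraph

section Grid

variable {T : Set (ℤ × ℤ)}

theorem gridGraph_adj_of_eq_add {p q : T} {v : ℤ × ℤ} (hv : v.1.natAbs + v.2.natAbs = 1)
    (hq : (q : ℤ × ℤ) = p + v) : (gridGraph T).Adj p q := by
  change ((p : ℤ × ℤ).1 - (q : ℤ × ℤ).1).natAbs + ((p : ℤ × ℤ).2 - (q : ℤ × ℤ).2).natAbs = 1
  rw [hq]
  simpa using hv

theorem exists_eq_add_of_gridGraph_adj {p q : T} (h : (gridGraph T).Adj p q) :
    ∃ v ∈ ({(1, 0), (0, 1)} : Set (ℤ × ℤ)), (q : ℤ × ℤ) = p + v ∨ (p : ℤ × ℤ) = q + v := by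
  obtain ⟨⟨p₁, p₂⟩, _⟩ := p
  obtain ⟨⟨q₁, q₂⟩, _⟩ := q
  change (p₁ - q₁).natAbs + (p₂ - q₂).natAbs = 1 at h
  simp only [mem_insert_iff, mem_singleton_iff, exists_eq_or_imp, exists_eq_left, Prod.mk_add_mk,
    Prod.mk.injEq]
  omega

theorem gridGraph_reachable_of_segment {p q v : ℤ × ℤ} (hv : v.1.natAbs + v.2.natAbs = 1)
    {d : ℤ} (hd : 0 ≤ d) (hseg : ∀ t ∈ Icc 0 d, p + t • v ∈ T) (hp : p ∈ T) (hq : q ∈ T)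
    (hpq : q = p + d • v) : (gridGraph T).Reachable ⟨p, hp⟩ ⟨q, hq⟩ := by
  subst hpq
  induction d, hd using Int.leInduction with
  | base => simp
  | succ n hn ih =>
    have hn' := hseg n ⟨hn, by omega⟩
    refine (ih (fun t ⟨ht₀, ht⟩ => hseg t ⟨ht₀, by omega⟩) hn').trans
      (gridGraph_adj_of_eq_add hv ?_).reachable
    simp only [add_smul, one_smul, add_assoc]

end Grid

section Scale

variable {c : ℤ} {S : Set (ℤ × ℤ)}

theorem mem_scaleShape {p : ℤ × ℤ} :
    p ∈ scaleShape c S ↔ ∃ q ∈ S, ∃ o ∈ Ico 0 c ×ˢ Ico 0 c, p = c • q + o := by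
  constructor
  · rintro ⟨q, hq, i, j, hi₀, hi, hj₀, hj, rfl⟩
    exact ⟨q, hq, (i, j), ⟨⟨hi₀, hi⟩, hj₀, hj⟩, rfl⟩
  · rintro ⟨q, hq, ⟨i, j⟩, ⟨⟨hi₀, hi⟩, hj₀, hj⟩, rfl⟩
    exact ⟨q, hq, i, j, hi₀, hi, hj₀, hj, rfl⟩

theorem smul_add_mem_scaleShape {q o : ℤ × ℤ} (hq : q ∈ S) (ho : o ∈ Ico 0 c ×ˢ Ico 0 c) :
    c • q + o ∈ scaleShape c S :=
  mem_scaleShape.2 ⟨q, hq, o, ho, rfl⟩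

theorem smul_mem_scaleShape (hc : 0 < c) {q : ℤ × ℤ} (hq : q ∈ S) : c • q ∈ scaleShape c S := by
  simpa using smul_add_mem_scaleShape hq (o := 0) ⟨⟨le_rfl, hc⟩, le_rfl, hc⟩

theorem scaleShape_reachable_smul_add {q o : ℤ × ℤ} (hq : q ∈ S) (ho : o ∈ Ico 0 c ×ˢ Ico 0 c)
    (h₀ : c • q ∈ scaleShape c S) (h : c • q + o ∈ scaleShape c S) :
    (gridGraph (scaleShape c S)).Reachable ⟨c • q, h₀⟩ ⟨c • q + o, h⟩ := by
  obtain ⟨⟨hi₀, hi⟩, hj₀, hj⟩ := ho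
  have hrow : ∀ t ∈ Icc 0 o.1, c • q + t • ((1, 0) : ℤ × ℤ) ∈ scaleShape c S := fun t ⟨ht₀, ht⟩ =>
    by simpa using smul_add_mem_scaleShape hq (o := (t, 0)) ⟨⟨ht₀, by omega⟩, le_rfl, by omega⟩
  have hcol : ∀ t ∈ Icc 0 o.2, (c • q + (o.1, 0)) + t • ((0, 1) : ℤ × ℤ) ∈ scaleShape c S :=
    fun t ⟨ht₀, ht⟩ => by
      simpa [add_assoc] using
        smul_add_mem_scaleShape hq (o := (o.1, t)) ⟨⟨hi₀, hi⟩, ht₀, by omega⟩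
  have hcorner : c • q + (o.1, 0) ∈ scaleShape c S := by simpa using hrow o.1 ⟨hi₀, le_rfl⟩
  exact (gridGraph_reachable_of_segment (by decide) hi₀ hrow h₀ hcorner (by simp)).trans
    (gridGraph_reachable_of_segment (by decide) hj₀ hcol hcorner h (by ext <;> simp [add_assoc]))

theorem scaleShape_reachable_smul_of_eq_add (hc : 0 < c) {q r v : ℤ × ℤ}
    (hv : v ∈ ({(1, 0), (0, 1)} : Set (ℤ × ℤ))) (hq : q ∈ S)
    (h₀ : c • q ∈ scaleShape c S) (h : c • r ∈ scaleShape c S) (hr : r = q + v) :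
    (gridGraph (scaleShape c S)).Reachable ⟨c • q, h₀⟩ ⟨c • r, h⟩ := by
  have hv₁ : v.1.natAbs + v.2.natAbs = 1 := by rcases hv with rfl | rfl <;> rfl
  refine gridGraph_reachable_of_segment hv₁ hc.le (fun t ⟨ht₀, ht⟩ => ?_) h₀ h
    (by rw [hr, smul_add])
  rcases ht.lt_or_eq with ht | rfl
  · exact smul_add_mem_scaleShape hq (by rcases hv with rfl | rfl <;> simp <;> omega)
  · rwa [← smul_add, ← hr]

theorem scaleShape_reachable_smul_of_adj (hc : 0 < c) {a b : S} (hadj : (gridGraph S).Adj a b)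
    (ha : c • (a : ℤ × ℤ) ∈ scaleShape c S) (hb : c • (b : ℤ × ℤ) ∈ scaleShape c S) :
    (gridGraph (scaleShape c S)).Reachable ⟨c • a, ha⟩ ⟨c • b, hb⟩ := by
  obtain ⟨v, hv, hba | hab⟩ := exists_eq_add_of_gridGraph_adj hadj
  · exact scaleShape_reachable_smul_of_eq_add hc hv a.2 ha hb hba
  · exact (scaleShape_reachable_smul_of_eq_add hc hv b.2 hb ha hab).symm

end Scale

/-- Scaling preserves connectivity: if `S` is grid-connected then so is its scale-`c`
version, for any positive integer `c`. -/
theorem scale_preserves_connected (S : Set (ℤ × ℤ)) (c : ℤ) (hc : 0 < c)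
    (hconn : (gridGraph S).Connected) : (gridGraph (scaleShape c S)).Connected := by
  refine hconn.lift (fun q => ⟨c • (q : ℤ × ℤ), smul_mem_scaleShape hc q.2⟩)
    (fun a b hab => scaleShape_reachable_smul_of_adj hc hab _ _) fun ⟨p, hp⟩ => ?_
  obtain ⟨q, hq, o, ho, rfl⟩ := mem_scaleShape.1 hp
  exact ⟨⟨q, hq⟩, scaleShape_reachable_smul_add hq ho _ hp⟩
end

section
/- The perimeter walk of a scale-2 spanning tree visits every pixel: if S ⊆ ℤ² is a finite connected shape and T is a spanning tree of its adjacency graph, then in the scale-2 version of S, the union of the 2×2 blocks of all vertices of S together with the doubled edges of T is connected, and its set of cells equals the scale-2 version of S exactly when T spans S. -/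
/-- The `2×2` block of cells corresponding to a pixel `q` of the unscaled shape. -/
def block2 (q : ℤ × ℤ) : Set (ℤ × ℤ) :=
  {p | ∃ i j : ℤ, 0 ≤ i ∧ i < 2 ∧ 0 ≤ j ∧ j < 2 ∧ p = (2 * q.1 + i, 2 * q.2 + j)}

/-- The scale-2 version of a shape `S ⊆ ℤ²`. -/
def scale2 (S : Set (ℤ × ℤ)) : Set (ℤ × ℤ) :=
  {p | ∃ q ∈ S, ∃ i j : ℤ, 0 ≤ i ∧ i < 2 ∧ 0 ≤ j ∧ j < 2 ∧ p = (2 * q.1 + i, 2 * q.2 + j)}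

open SimpleGraph

theorem SimpleGraph.Connected.induce_iUnion {V W : Type*} {G : SimpleGraph V}
    {H : SimpleGraph W} (hG : G.Connected) (B : V → Set W)
    (hB : ∀ v, (H.induce (B v)).Connected)
    (hadj : ∀ u v, G.Adj u v → ∃ x ∈ B u, ∃ y ∈ B v, H.Adj x y) :
    (H.induce (⋃ v, B v)).Connected := by
  have reach_of_subset {s : Set W} (hs : s ⊆ ⋃ v, B v) (hconn : (H.induce s).Connected)
      {x y : W} (hx : x ∈ s) (hy : y ∈ s) :
      (H.induce (⋃ v, B v)).Reachable ⟨x, hs hx⟩ ⟨y, hs hy⟩ :=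
    (hconn.preconnected ⟨x, hx⟩ ⟨y, hy⟩).map (induceHomOfLE H hs).toHom
  have reach_of_reachable {u v : V} (huv : G.Reachable u v) {x y : W} (hx : x ∈ B u)
      (hy : y ∈ B v) :
      (H.induce (⋃ v, B v)).Reachable ⟨x, Set.mem_iUnion_of_mem u hx⟩
        ⟨y, Set.mem_iUnion_of_mem v hy⟩ := by
    obtain ⟨p⟩ := huv
    induction p generalizing x with
    | nil => exact reach_of_subset (Set.subset_iUnion B _) (hB _) hx hy
    | @cons u w v huw p ih =>
      obtain ⟨x', hx', y', hy', hxy⟩ := hadj u w huw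
      have hpair := connected_induce_union (hB u).preconnected (hB w).preconnected hx' hy' hxy
      exact (reach_of_subset (Set.union_subset (Set.subset_iUnion B u) (Set.subset_iUnion B w))
        hpair (Or.inl hx) (Or.inr hy')).trans (ih hy' hy)
  obtain ⟨v⟩ := hG.nonempty
  obtain ⟨⟨x, hx⟩⟩ := (hB v).nonempty
  refine (connected_iff_exists_forall_reachable _).mpr ⟨⟨x, Set.mem_iUnion_of_mem v hx⟩, ?_⟩
  rintro ⟨y, hy⟩
  obtain ⟨u, hyu⟩ := Set.mem_iUnion.mp hy
  exact reach_of_reachable (hG v u) hx hyu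

theorem hasse_int_boxProd_adj {p q : ℤ × ℤ} :
    (hasse ℤ □ hasse ℤ).Adj p q ↔ (p.1 - q.1).natAbs + (p.2 - q.2).natAbs = 1 := by
  simp only [boxProd_adj, hasse_adj, Order.covBy_iff_add_one_eq]
  omega

theorem gridGraph_eq_induce (S : Set (ℤ × ℤ)) : gridGraph S = (hasse ℤ □ hasse ℤ).induce S := by
  ext p q
  exact hasse_int_boxProd_adj.symm

theorem induce_block2_connected (q : ℤ × ℤ) :
    ((hasse ℤ □ hasse ℤ).induce (block2 q)).Connected := by
  have near {a b : ℤ × ℤ} (ha : a ∈ block2 q) (hb : b ∈ block2 q)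
      (hab : (a.1 - b.1).natAbs + (a.2 - b.2).natAbs ≤ 1) :
      ((hasse ℤ □ hasse ℤ).induce (block2 q)).Reachable ⟨a, ha⟩ ⟨b, hb⟩ := by
    rcases Nat.le_one_iff_eq_zero_or_eq_one.mp hab with h | h
    · obtain rfl : a = b := Prod.ext (by omega) (by omega)
      rfl
    · exact Adj.reachable (hasse_int_boxProd_adj.mpr h)
  have hbase : (2 * q.1, 2 * q.2) ∈ block2 q := ⟨0, 0, by simp⟩
  refine (connected_iff_exists_forall_reachable _).mpr ⟨⟨_, hbase⟩, ?_⟩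
  rintro ⟨_, i, j, hi0, hi2, hj0, hj2, rfl⟩
  have hrow : (2 * q.1 + i, 2 * q.2) ∈ block2 q := ⟨i, 0, by simp [hi0, hi2]⟩
  exact (near hbase hrow (by omega)).trans (near hrow _ (by omega))

theorem exists_block2_adj_of_adj {p q : ℤ × ℤ} (h : (hasse ℤ □ hasse ℤ).Adj p q) :
    ∃ x ∈ block2 p, ∃ y ∈ block2 q, (hasse ℤ □ hasse ℤ).Adj x y := by
  rw [hasse_int_boxProd_adj] at h
  -- `x` and `y` are the cells of the two blocks that face each other.
  refine ⟨_, ⟨if p.1 < q.1 then 1 else 0, if p.2 < q.2 then 1 else 0, ?_, ?_, ?_, ?_, rfl⟩,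
    _, ⟨if q.1 < p.1 then 1 else 0, if q.2 < p.2 then 1 else 0, ?_, ?_, ?_, ?_, rfl⟩, ?_⟩
  all_goals try rw [hasse_int_boxProd_adj]
  all_goals split_ifs <;> omega

theorem iUnion_block2 (S : Set (ℤ × ℤ)) : (⋃ q : S, block2 q) = scale2 S := by
  ext p
  simp [block2, scale2]

theorem scale2_spanning_tree_blocks_general (S : Set (ℤ × ℤ))
    (T : SimpleGraph S) (hle : T ≤ gridGraph S) (htree : T.IsTree) :
    (gridGraph (scale2 S)).Connected ∧ (⋃ q ∈ S, block2 q) = scale2 S := by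
  refine ⟨?_, (Set.biUnion_eq_iUnion S fun q _ => block2 q).trans (iUnion_block2 S)⟩
  rw [gridGraph_eq_induce, ← iUnion_block2]
  exact htree.connected.induce_iUnion (fun v : S => block2 v) (fun v => induce_block2_connected v)
    (fun _ _ h => exists_block2_adj_of_adj (hasse_int_boxProd_adj.mpr (hle h)))

/-- The perimeter walk of a scale-2 spanning tree visits every pixel: if `S` is a finite
connected shape and `T` is a spanning tree of its grid-adjacency graph, then the union of the
`2×2` blocks of all vertices of `S` (which, together with the doubled edges of `T`, forms the
scale-2 assembly) is grid-connected, and its set of cells is exactly the scale-2 version of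
`S`. -/
theorem scale2_spanning_tree_blocks (S : Set (ℤ × ℤ)) (hfin : S.Finite)
    (T : SimpleGraph S) (hle : T ≤ gridGraph S) (htree : T.IsTree) :
    (gridGraph (scale2 S)).Connected ∧ (⋃ q ∈ S, block2 q) = scale2 S :=
  scale2_spanning_tree_blocks_general S T hle htree
end
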